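/- Upper bound for the even split channel: Z(W_{2L}^{(2i)}) ≤ Z(W_L^{(i)}) · sup_{y_L} Z_g(W̃_L^{(i)} | y_L). In particular Z(W_{2L}^{(2i)}) ≤ Z(W_L^{(i)}) since the conditional Bhattacharyya parameter is at most 1. -/
import Mathlib


open MeasureTheory

/- Model for statements about the polar transform step `L → 2L` over a channel with
first-order Markov noise.  `α` is the output alphabet of the split channel `W_L^{(i)}`,
`ν` a reference measure, `K x` the density of `W_L^{(i)}(·|x)`, `π a` extracts the last
channel output `y_L`, and `K' x y` the density of the genie-aided channel
`W̃_L^{(i)}(·|x, y_L = y)` used for the second block.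
`zg y = Z_g(W̃_L^{(i)}|y)` is the conditional Bhattacharyya parameter,
`Z = Z(W_L^{(i)})`, `Zg = Z_g(W_L^{(i)})` its average over the output density,
`Zodd = Z(W_{2L}^{(2i-1)})` and `Zeven = Z(W_{2L}^{(2i)})` are the Bhattacharyya
parameters of the two children obtained from the Arikan kernel
`(x₁, x₂) = (u₁ ⊕ u₂, u₂)` with the second block conditioned on `π a`. -/
/-- Upper bound for the even split channel:
`Z(W_{2L}^{(2i)}) ≤ Z(W_L^{(i)}) · sup_{y_L} Z_g(W̃_L^{(i)}|y_L)`; in particular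
`Z(W_{2L}^{(2i)}) ≤ Z(W_L^{(i)})` since the conditional Bhattacharyya parameter is ≤ 1. -/
theorem even_split_bhattacharyya_upper
    {α : Type*} [MeasurableSpace α] (ν : Measure α)
    (K : Bool → α → ℝ) (K' : Bool → ℝ → α → ℝ) (π : α → ℝ)
    (zg : ℝ → ℝ) (Z Zg : ℝ)
    (hK0 : ∀ x a, 0 ≤ K x a) (hK1 : ∀ x, ∫ a, K x a ∂ν = 1)
    (hK'0 : ∀ x y a, 0 ≤ K' x y a) (hK'1 : ∀ x y, ∫ a, K' x y a ∂ν = 1)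
    (hzg : ∀ y, zg y = ∫ a, Real.sqrt (K' false y a * K' true y a) ∂ν)
    (hZ : Z = ∫ a, Real.sqrt (K false a * K true a) ∂ν)
    (hZg : ∀ x, (∫ a, K x a * zg (π a) ∂ν) = Zg)
    (Zeven : ℝ)
    (hZeven : Zeven = ∑ u₁ : Bool, ∫ a, ∫ b, Real.sqrt
        ((2⁻¹ * (K u₁ a * K' false (π a) b)) *
         (2⁻¹ * (K (!u₁) a * K' true (π a) b))) ∂ν ∂ν) :
    Zeven ≤ Z * (⨆ y : ℝ, zg y) ∧ Zeven ≤ Z := by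
  have hKint : ∀ x, Integrable (K x) ν := by
    intro x
    by_contra h
    have h1 := hK1 x
    rw [integral_undef h] at h1
    norm_num at h1
  have hK'int : ∀ x y, Integrable (K' x y) ν := by
    intro x y
    by_contra h
    have h1 := hK'1 x y
    rw [integral_undef h] at h1
    norm_num at h1
  have hzg0 : ∀ y, 0 ≤ zg y := fun y => by
    rw [hzg]; exact integral_nonneg fun a => Real.sqrt_nonneg _
  have hzg1 : ∀ y, zg y ≤ 1 := by
    intro y
    rw [hzg]
    have hint : Integrable (fun a => 2⁻¹ * (K' false y a + K' true y a)) ν :=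
      (((hK'int false y).add (hK'int true y)).const_mul _)
    calc ∫ a, Real.sqrt (K' false y a * K' true y a) ∂ν
        ≤ ∫ a, 2⁻¹ * (K' false y a + K' true y a) ∂ν := by
          refine integral_mono_of_nonneg (ae_of_all _ fun a => Real.sqrt_nonneg _) hint
            (ae_of_all _ fun a => ?_)
          dsimp only
          rw [Real.sqrt_mul (hK'0 false y a)]
          nlinarith [Real.sq_sqrt (hK'0 false y a), Real.sq_sqrt (hK'0 true y a),
            sq_nonneg (Real.sqrt (K' false y a) - Real.sqrt (K' true y a))]
      _ = 1 := by
          rw [integral_const_mul, integral_add (hK'int false y) (hK'int true y),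
            hK'1, hK'1]; norm_num
  have hsint : Integrable (fun a => Real.sqrt (K false a * K true a)) ν := by
    have hb : Integrable (fun a => 2⁻¹ * (K false a + K true a)) ν :=
      (((hKint false).add (hKint true)).const_mul _)
    refine Integrable.mono' hb
      (Real.continuous_sqrt.measurable.comp_aemeasurable
        ((hKint false).aemeasurable.mul (hKint true).aemeasurable)).aestronglyMeasurable
      (ae_of_all _ fun a => ?_)
    rw [Real.norm_eq_abs, abs_of_nonneg (Real.sqrt_nonneg _),
      Real.sqrt_mul (hK0 false a)]
    nlinarith [Real.sq_sqrt (hK0 false a), Real.sq_sqrt (hK0 true a),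
      sq_nonneg (Real.sqrt (K false a) - Real.sqrt (K true a))]
  have hbdd : BddAbove (Set.range zg) := ⟨1, by rintro _ ⟨y, rfl⟩; exact hzg1 y⟩
  set S := ⨆ y : ℝ, zg y with hSdef
  have hzgS : ∀ y, zg y ≤ S := fun y => le_ciSup hbdd y
  have hS1 : S ≤ 1 := ciSup_le hzg1
  have hZnn : 0 ≤ Z := by
    rw [hZ]; exact integral_nonneg fun a => Real.sqrt_nonneg _
  have key : Zeven = ∫ a, Real.sqrt (K false a * K true a) * zg (π a) ∂ν := by
    rw [hZeven]
    have step : ∀ u₁ : Bool, (∫ a, ∫ b, Real.sqrt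
        ((2⁻¹ * (K u₁ a * K' false (π a) b)) *
         (2⁻¹ * (K (!u₁) a * K' true (π a) b))) ∂ν ∂ν)
        = 2⁻¹ * ∫ a, Real.sqrt (K false a * K true a) * zg (π a) ∂ν := by
      intro u₁
      rw [← integral_const_mul]
      refine integral_congr_ae (ae_of_all _ fun a => ?_)
      dsimp only
      have hKK : K u₁ a * K (!u₁) a = K false a * K true a := by
        cases u₁ <;> simp [mul_comm]
      have h1 : ∀ b, Real.sqrt ((2⁻¹ * (K u₁ a * K' false (π a) b)) *
          (2⁻¹ * (K (!u₁) a * K' true (π a) b)))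
          = (2⁻¹ * Real.sqrt (K false a * K true a)) *
            Real.sqrt (K' false (π a) b * K' true (π a) b) := by
        intro b
        have e : (2⁻¹ * (K u₁ a * K' false (π a) b)) *
            (2⁻¹ * (K (!u₁) a * K' true (π a) b))
            = (2⁻¹ : ℝ)^2 * ((K u₁ a * K (!u₁) a) *
              (K' false (π a) b * K' true (π a) b)) := by ring
        rw [e, hKK, Real.sqrt_mul (by positivity),
          Real.sqrt_sq (by norm_num : (0:ℝ) ≤ 2⁻¹),
          Real.sqrt_mul (mul_nonneg (hK0 false a) (hK0 true a))]
        ring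
      simp only [h1]
      rw [integral_const_mul, hzg]
      ring
    rw [Fintype.sum_bool, step, step]
    ring
  have hmain : Zeven ≤ Z * S := by
    rw [key, hZ]
    calc ∫ a, Real.sqrt (K false a * K true a) * zg (π a) ∂ν
        ≤ ∫ a, Real.sqrt (K false a * K true a) * S ∂ν := by
          refine integral_mono_of_nonneg
            (ae_of_all _ fun a => mul_nonneg (Real.sqrt_nonneg _) (hzg0 _))
            (hsint.mul_const S)
            (ae_of_all _ fun a =>
              mul_le_mul_of_nonneg_left (hzgS (π a)) (Real.sqrt_nonneg _))
      _ = (∫ a, Real.sqrt (K false a * K true a) ∂ν) * S := integral_mul_const _ _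
  refine ⟨hmain, hmain.trans ?_⟩
  calc Z * S ≤ Z * 1 := mul_le_mul_of_nonneg_left hS1 hZnn
    _ = Z := mul_one Z
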